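/- Let W be the generalized Witt algebra and D ∈ Der(W, W⊗W) a homogeneous derivation of degree 0 (with respect to the A-gradation). Then D vanishes on the torus: D(∂) = 0 for all ∂ ∈ T = W₀. -/

import Mathlib

open TensorProduct

/-- The homogeneous component `V_x = Σ_{x₁+x₂=x} W_{x₁} ⊗ W_{x₂}` of `V = W ⊗ W`
for the generalized Witt algebra. -/
noncomputable def wittVx {F : Type*} [Field F] {n : ℕ} {A : AddSubgroup (Fin n → F)}
    {L : Type*} [LieRing L] [LieAlgebra F L]
    (t : A → (Fin n → F) →ₗ[F] L) (x : A) : Submodule F (L ⊗[F] L) :=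
  Submodule.span F {w | ∃ (x₁ x₂ : A) (d d' : Fin n → F),
    x₁ + x₂ = x ∧ w = t x₁ d ⊗ₜ[F] t x₂ d'}

/-!
A degree-0 derivation maps `t y d` into `V_y`, on which a torus element `t 0 e` acts by the
scalar `e ⬝ᵥ y`. In the derivation rule for `⁅t y d, t 0 e⁆` the two terms involving
`D (t y d)` therefore cancel, so `D (t 0 e)` is annihilated by all of `W`. An invariant
`v = ∑ ℬ (x, k) ⊗ v_(x,k)` of `W ⊗ M` vanishes: for the cofinitely many `y ∈ A` with `y + x`
outside the support of `v`, the `(y + x, k)`-coefficient of `⁅t y (single k 1), v⁆ = 0` says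
that the additive map `y ↦ ∑ m, y m • v_(x,m)` is constant; an additive map on the infinite
group `A` that is eventually constant is zero, and `A` spans `F ^ n`, so `v_(x,k) = 0`.
-/

open Filter

theorem AddMonoidHom.eq_zero_of_eventually_eq_const {G M : Type*} [AddGroup G] [Infinite G]
    [AddGroup M] (g : G →+ M) {c : M} (h : ∀ᶠ y in cofinite, g y = c) : g = 0 := by
  ext b
  obtain ⟨y, hy, hyb⟩ := (h.and ((add_left_injective b).tendsto_cofinite.eventually h)).exists
  simpa [map_add, hy] using hyb

theorem AddSubgroup.infinite_of_span_eq_top {F V : Type*} [Field F] [CharZero F] [AddCommGroup V]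
    [Module F V] [Nontrivial V] {A : AddSubgroup V} (hA : Submodule.span F (A : Set V) = ⊤) :
    Infinite A := by
  obtain ⟨b, hbA, hb⟩ : ∃ b ∈ A, b ≠ 0 := by
    by_contra! h
    exact top_ne_bot (hA ▸ Submodule.span_eq_bot.mpr h)
  refine Infinite.of_injective (fun m : ℕ => m • (⟨b, hbA⟩ : A)) fun m₁ m₂ h => ?_
  have : (m₁ : F) • b = (m₂ : F) • b := by
    simpa [Nat.cast_smul_eq_nsmul] using congrArg Subtype.val h
  exact Nat.cast_injective (smul_left_injective F hb this)

namespace WittAlgebra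

variable {F : Type*} [Field F] {n : ℕ} {A : AddSubgroup (Fin n → F)}
  {L : Type*} [LieRing L] [LieAlgebra F L] {t : A → (Fin n → F) →ₗ[F] L}

theorem lie_torus_apply
    (hbr : ∀ (x y : A) (d d' : Fin n → F),
      ⁅t x d, t y d'⁆ = t (x + y) ((d ⬝ᵥ y) • d' - (d' ⬝ᵥ x) • d))
    (e : Fin n → F) (x : A) (d : Fin n → F) : ⁅t 0 e, t x d⁆ = (e ⬝ᵥ x) • t x d := by
  simp [hbr]

theorem lie_torus_of_mem_wittVx
    (hbr : ∀ (x y : A) (d d' : Fin n → F),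
      ⁅t x d, t y d'⁆ = t (x + y) ((d ⬝ᵥ y) • d' - (d' ⬝ᵥ x) • d))
    (e : Fin n → F) {y : A} {v : L ⊗[F] L} (hv : v ∈ wittVx t y) :
    ⁅t 0 e, v⁆ = (e ⬝ᵥ y) • v := by
  induction hv using Submodule.span_induction with
  | mem w hw =>
    obtain ⟨x₁, x₂, d, d', rfl, rfl⟩ := hw
    rw [LieModule.lie_tmul_right, lie_torus_apply hbr, lie_torus_apply hbr, ← smul_tmul',
      tmul_smul, ← add_smul, AddSubgroup.coe_add, dotProduct_add]
  | zero => simp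
  | add u w _ _ hu hw => rw [lie_add, hu, hw, smul_add]
  | smul a u _ hu => rw [lie_smul, hu, smul_comm]

theorem lie_map_torus_eq_zero
    (hbr : ∀ (x y : A) (d d' : Fin n → F),
      ⁅t x d, t y d'⁆ = t (x + y) ((d ⬝ᵥ y) • d' - (d' ⬝ᵥ x) • d))
    {D : L →ₗ[F] L ⊗[F] L} (hD : ∀ u w : L, D ⁅u, w⁆ = ⁅u, D w⁆ - ⁅w, D u⁆)
    (hdeg : ∀ y : A, ∀ u ∈ LinearMap.range (t y), D u ∈ wittVx t y)
    (e : Fin n → F) (y : A) (d : Fin n → F) : ⁅t y d, D (t 0 e)⁆ = 0 := by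
  have hlie : ⁅t y d, t 0 e⁆ = -((e ⬝ᵥ y) • t y d) := by rw [← lie_skew, lie_torus_apply hbr]
  have hact : ⁅t 0 e, D (t y d)⁆ = (e ⬝ᵥ y) • D (t y d) :=
    lie_torus_of_mem_wittVx hbr e (hdeg y _ ⟨d, rfl⟩)
  have h := hD (t y d) (t 0 e)
  rw [hlie, hact, map_neg, map_smul] at h
  linear_combination (norm := module) -h

section Coordinates

variable {ℬ : Module.Basis (A × Fin n) F L}

open Classical in
theorem repr_apply (hℬ : ∀ (x : A) (i : Fin n), ℬ (x, i) = t x (Pi.single i 1))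
    (z : A) (w : Fin n → F) (x : A) (k : Fin n) :
    ℬ.repr (t z w) (x, k) = if x = z then w k else 0 := by
  have : t z w = ∑ i, w i • ℬ (z, i) := by
    simp_rw [hℬ, ← map_smul, ← map_sum, ← Pi.single_smul', smul_eq_mul, mul_one,
      Finset.univ_sum_single]
  rcases eq_or_ne x z with rfl | hxz
  · simp [this, Finsupp.single_apply]
  · simp [this, hxz]

theorem repr_lie_add (hℬ : ∀ (x : A) (i : Fin n), ℬ (x, i) = t x (Pi.single i 1))
    (hbr : ∀ (x y : A) (d d' : Fin n → F),
      ⁅t x d, t y d'⁆ = t (x + y) ((d ⬝ᵥ y) • d' - (d' ⬝ᵥ x) • d))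
    (y : A) (d : Fin n → F) (u : L) (x : A) (k : Fin n) :
    ℬ.repr ⁅t y d, u⁆ (y + x, k) =
      (d ⬝ᵥ x) * ℬ.repr u (x, k) - d k * ∑ m, (y : Fin n → F) m * ℬ.repr u (x, m) := by
  suffices h : ℬ.coord (y + x, k) ∘ₗ LieAlgebra.ad F L (t y d) =
      (d ⬝ᵥ x) • ℬ.coord (x, k) - d k • ∑ m, (y : Fin n → F) m • ℬ.coord (x, m) by
    simpa [Finset.sum_apply] using LinearMap.congr_fun h u
  refine ℬ.ext fun ⟨x', k'⟩ => ?_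
  rcases eq_or_ne x x' with rfl | hx
  · simp [hℬ, hbr, repr_apply hℬ, Pi.single_apply, mul_comm]
  · simp [hℬ, hbr, repr_apply hℬ, hx]

variable {M : Type*} [AddCommGroup M] [Module F M] [LieRingModule L M] [LieModule F L M]

local notation "κ" => equivFinsuppOfBasisLeft ℬ

open Classical in
theorem equivFinsuppOfBasisLeft_lie_add
    (hℬ : ∀ (x : A) (i : Fin n), ℬ (x, i) = t x (Pi.single i 1))
    (hbr : ∀ (x y : A) (d d' : Fin n → F),
      ⁅t x d, t y d'⁆ = t (x + y) ((d ⬝ᵥ y) • d' - (d' ⬝ᵥ x) • d))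
    (y : A) (d : Fin n → F) (v : L ⊗[F] M) (x : A) (k : Fin n) :
    κ ⁅t y d, v⁆ (y + x, k) = ⁅t y d, κ v (y + x, k)⁆ + (d ⬝ᵥ x) • κ v (x, k)
      - d k • ∑ m, (y : Fin n → F) m • κ v (x, m) := by
  induction v using TensorProduct.induction_on with
  | zero => simp
  | tmul u w =>
    simp only [LieModule.lie_tmul_right, map_add, Finsupp.add_apply,
      equivFinsuppOfBasisLeft_apply_tmul_apply, repr_lie_add hℬ hbr, lie_smul, smul_smul,
      Finset.smul_sum]
    rw [← Finset.sum_smul, ← Finset.mul_sum, sub_smul]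
    abel
  | add v w hv hw =>
    simp only [lie_add, map_add, Finsupp.add_apply, hv, hw, smul_add, Finset.sum_add_distrib]
    abel

open Classical in
theorem eq_zero_of_forall_lie_eq_zero [CharZero F]
    (hA : Submodule.span F (A : Set (Fin n → F)) = ⊤)
    (hℬ : ∀ (x : A) (i : Fin n), ℬ (x, i) = t x (Pi.single i 1))
    (hbr : ∀ (x y : A) (d d' : Fin n → F),
      ⁅t x d, t y d'⁆ = t (x + y) ((d ⬝ᵥ y) • d' - (d' ⬝ᵥ x) • d))
    {v : L ⊗[F] M} (hv : ∀ (y : A) (d : Fin n → F), ⁅t y d, v⁆ = 0) : v = 0 := by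
  rw [← (κ).map_eq_zero_iff]
  ext ⟨x, k⟩
  have : Nonempty (Fin n) := ⟨k⟩
  have : Infinite A := AddSubgroup.infinite_of_span_eq_top hA
  let g : (Fin n → F) →ₗ[F] M := Fintype.linearCombination F fun m => κ v (x, m)
  have hg : ∀ᶠ y : A in cofinite, g y = (x : Fin n → F) k • κ v (x, k) := by
    filter_upwards [(add_left_injective x).tendsto_cofinite.eventually
      ((κ v).support.image Prod.fst).eventually_cofinite_notMem] with y hy
    have hc : κ v (y + x, k) = 0 := by
      by_contra h
      exact hy (Finset.mem_image_of_mem _ (Finsupp.mem_support_iff.2 h))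
    have h := equivFinsuppOfBasisLeft_lie_add hℬ hbr y (Pi.single k 1) v x k
    rw [hv, hc, map_zero, Finsupp.coe_zero, Pi.zero_apply, lie_zero, zero_add, single_dotProduct,
      one_mul, Pi.single_eq_same, one_smul, eq_comm, sub_eq_zero] at h
    exact (Fintype.linearCombination_apply F _ _).trans h.symm
  have hgA : g.toAddMonoidHom.comp A.subtype = 0 :=
    AddMonoidHom.eq_zero_of_eventually_eq_const _ hg
  have hg0 : g = 0 := LinearMap.ext_on hA fun y hy => DFunLike.congr_fun hgA ⟨y, hy⟩
  simpa [g] using LinearMap.congr_fun hg0 (Pi.single k 1)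

end Coordinates

end WittAlgebra

/-- For the generalized Witt algebra `W`, any homogeneous derivation
`D : W → W ⊗ W` of degree `0` vanishes on the torus `T = W₀`. -/
theorem witt_bialg_stmt14 {F : Type*} [Field F] [CharZero F] {n : ℕ}
    {A : AddSubgroup (Fin n → F)}
    (hA : Submodule.span F (A : Set (Fin n → F)) = ⊤)
    {L : Type*} [LieRing L] [LieAlgebra F L]
    (t : A → (Fin n → F) →ₗ[F] L)
    (ℬ : Module.Basis (A × Fin n) F L)
    (hℬ : ∀ (x : A) (i : Fin n), ℬ (x, i) = t x (Pi.single i 1))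
    (hbr : ∀ (x y : A) (d d' : Fin n → F),
      ⁅t x d, t y d'⁆ = t (x + y)
        ((∑ i, d i * (y : Fin n → F) i) • d' - (∑ i, d' i * (x : Fin n → F) i) • d))
    (D : L →ₗ[F] L ⊗[F] L)
    (hD : ∀ u w : L, D ⁅u, w⁆ = ⁅u, D w⁆ - ⁅w, D u⁆)
    (hdeg : ∀ y : A, ∀ u ∈ LinearMap.range (t y), D u ∈ wittVx t y) :
    ∀ u ∈ LinearMap.range (t 0), D u = 0 := by
  rintro _ ⟨e, rfl⟩
  exact WittAlgebra.eq_zero_of_forall_lie_eq_zero hA hℬ hbr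
    (WittAlgebra.lie_map_torus_eq_zero hbr hD hdeg e)
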